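/- Let u ≠ 0 in ℂ^N, b > 0, C = {z ∈ ℂ^N : |u^H z|² ≤ b}, and let x ∈ ℂ^N with |u^H x|² > b. Then z* = x + ((√b − |u^H x|)/(‖u‖₂² |u^H x|)) (u^H x) u is the orthogonal projection of x onto C: for every z ∈ C, ‖x − z*‖₂ ≤ ‖x − z‖₂. -/

import Mathlib

/-! The map `z ↦ ⟪u, z⟫` is `‖u‖`-Lipschitz, so every `z ∈ C` lies at distance at least
`(|⟪u, x⟫| - √b) / ‖u‖` from `x`. Moving `x` along `u` by the given amount shrinks `⟪u, x⟫` by the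
real factor `√b / |⟪u, x⟫|`, which lands exactly on the boundary of `C` and attains that bound. -/

open scoped InnerProductSpace

section

variable {𝕜 E : Type*} [RCLike 𝕜] [NormedAddCommGroup E] [InnerProductSpace 𝕜 E]

theorem norm_inner_sub_norm_inner_le (u x z : E) :
    ‖⟪u, x⟫_𝕜‖ - ‖⟪u, z⟫_𝕜‖ ≤ ‖u‖ * ‖x - z‖ :=
  calc ‖⟪u, x⟫_𝕜‖ - ‖⟪u, z⟫_𝕜‖ ≤ ‖⟪u, x⟫_𝕜 - ⟪u, z⟫_𝕜‖ := norm_sub_norm_le _ _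
    _ = ‖⟪u, x - z⟫_𝕜‖ := by rw [inner_sub_right]
    _ ≤ ‖u‖ * ‖x - z‖ := norm_inner_le_norm _ _

theorem inner_add_smul_inner_smul_right (u x : E) (t : 𝕜) :
    ⟪u, x + (t * ⟪u, x⟫_𝕜) • u⟫_𝕜 = (1 + t * ‖u‖ ^ 2) * ⟪u, x⟫_𝕜 := by
  rw [inner_add_right, inner_smul_right, inner_self_eq_norm_sq_to_K]
  ring

theorem norm_inner_add_smul_inner_smul_eq (u x : E) (hu : u ≠ 0) {s : ℝ} (hs : 0 ≤ s)
    (hx : ⟪u, x⟫_𝕜 ≠ 0) :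
    ‖⟪u, x + (((s - ‖⟪u, x⟫_𝕜‖) / (‖u‖ ^ 2 * ‖⟪u, x⟫_𝕜‖) : ℝ) * ⟪u, x⟫_𝕜) • u⟫_𝕜‖ = s := by
  have ha : 0 < ‖⟪u, x⟫_𝕜‖ := norm_pos_iff.mpr hx
  have hu' : 0 < ‖u‖ := norm_pos_iff.mpr hu
  have hfactor : 1 + (s - ‖⟪u, x⟫_𝕜‖) / (‖u‖ ^ 2 * ‖⟪u, x⟫_𝕜‖) * ‖u‖ ^ 2 = s / ‖⟪u, x⟫_𝕜‖ := by
    field_simp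
    ring
  rw [inner_add_smul_inner_smul_right, norm_mul, ← RCLike.ofReal_pow, ← RCLike.ofReal_mul,
    ← RCLike.ofReal_one, ← RCLike.ofReal_add, hfactor, RCLike.norm_ofReal,
    abs_of_nonneg (div_nonneg hs ha.le), div_mul_cancel₀ _ ha.ne']

theorem norm_mul_norm_smul_inner_smul (u x : E) (t : ℝ) :
    ‖u‖ * ‖((t : 𝕜) * ⟪u, x⟫_𝕜) • u‖ = |t| * ‖u‖ ^ 2 * ‖⟪u, x⟫_𝕜‖ := by
  rw [norm_smul, norm_mul, RCLike.norm_ofReal]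
  ring

end

theorem stmt2 {N : ℕ} (u : EuclideanSpace ℂ (Fin N)) (hu : u ≠ 0)
    (b : ℝ) (hb : 0 < b)
    (C : Set (EuclideanSpace ℂ (Fin N)))
    (hC : C = {z : EuclideanSpace ℂ (Fin N) | ‖(inner ℂ u z : ℂ)‖ ^ 2 ≤ b})
    (x : EuclideanSpace ℂ (Fin N)) (hx : ‖(inner ℂ u x : ℂ)‖ ^ 2 > b)
    (zstar : EuclideanSpace ℂ (Fin N))
    (hzstar : zstar = x + ((Real.sqrt b - ‖(inner ℂ u x : ℂ)‖) / (‖u‖ ^ 2 * ‖(inner ℂ u x : ℂ)‖)) •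
      ((inner ℂ u x : ℂ) • u)) :
    zstar ∈ C ∧ ∀ z ∈ C, ‖x - zstar‖ ≤ ‖x - z‖ := by
  set a := ‖(inner ℂ u x : ℂ)‖
  set t := (Real.sqrt b - a) / (‖u‖ ^ 2 * a)
  have hu' : 0 < ‖u‖ := norm_pos_iff.mpr hu
  have hsa : Real.sqrt b < a := by
    have := Real.sqrt_lt_sqrt hb.le hx
    rwa [Real.sqrt_sq (norm_nonneg _)] at this
  have ha : 0 < a := (Real.sqrt_nonneg b).trans_lt hsa
  have hshift : zstar = x + ((t : ℂ) * inner ℂ u x) • u := by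
    rw [hzstar, ← smul_assoc, Complex.real_smul]
  have hinner : ‖(inner ℂ u zstar : ℂ)‖ = Real.sqrt b := by
    rw [hshift]
    exact norm_inner_add_smul_inner_smul_eq u x hu (Real.sqrt_nonneg b) (norm_pos_iff.mp ha)
  have hdist : ‖u‖ * ‖x - zstar‖ = a - Real.sqrt b := by
    rw [hshift, sub_add_cancel_left, norm_neg]
    refine (norm_mul_norm_smul_inner_smul (𝕜 := ℂ) u x t).trans ?_
    rw [abs_of_neg (div_neg_of_neg_of_pos (by linarith) (by positivity))]
    change -t * ‖u‖ ^ 2 * a = a - Real.sqrt b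
    simp only [t]
    field_simp
    ring
  subst hC
  refine ⟨by simp [hinner, Real.sq_sqrt hb.le], fun z hz => ?_⟩
  have hz' : ‖(inner ℂ u z : ℂ)‖ ≤ Real.sqrt b := Real.le_sqrt_of_sq_le hz
  refine le_of_mul_le_mul_left ?_ hu'
  linarith [norm_inner_sub_norm_inner_le (𝕜 := ℂ) u x z]
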